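/- Let f be a normal function with hyperation F, let g be a left adjoint of f, and let G be the cohyperation of g. Then for every ordinal ξ, G ξ is a left adjoint of F ξ; that is, for all ordinals α, β: α = F ξ β implies G ξ α = β, and α < F ξ β implies G ξ α < β. -/

import Mathlib

open Ordinal

/-- An ordinal function is *initial* if it maps every initial segment onto an initial segment. -/
def Initial (g : Ordinal → Ordinal) : Prop :=
  ∀ β : Ordinal, ∃ γ : Ordinal, g '' {α | α < β} = {α | α < γ}

/-- A *weak hyperation* of a normal function `f`. -/
def WeakHyperation (f : Ordinal → Ordinal) (g : Ordinal → Ordinal → Ordinal) : Prop :=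
  (∀ ξ : Ordinal, Order.IsNormal (g ξ)) ∧ g 0 = id ∧ g 1 = f ∧
    ∀ ξ ζ : Ordinal, g (ξ + ζ) = g ξ ∘ g ζ

/-- `F` is *the hyperation* of `f`: the pointwise minimal weak hyperation. -/
def IsHyperation (f : Ordinal → Ordinal) (F : Ordinal → Ordinal → Ordinal) : Prop :=
  WeakHyperation f F ∧
    ∀ h : Ordinal → Ordinal → Ordinal, WeakHyperation f h → ∀ ξ ζ : Ordinal, F ξ ζ ≤ h ξ ζ

/-- A *weak cohyperation* of an initial function `f`. -/
def WeakCohyperation (f : Ordinal → Ordinal) (g : Ordinal → Ordinal → Ordinal) : Prop :=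
  (∀ ξ : Ordinal, Initial (g ξ)) ∧ g 0 = id ∧ g 1 = f ∧
    ∀ ξ ζ : Ordinal, g (ξ + ζ) = g ζ ∘ g ξ

/-- `G` is *the cohyperation* of `f`: the pointwise maximal weak cohyperation. -/
def IsCohyperation (f : Ordinal → Ordinal) (G : Ordinal → Ordinal → Ordinal) : Prop :=
  WeakCohyperation f G ∧
    ∀ h : Ordinal → Ordinal → Ordinal, WeakCohyperation f h → ∀ ξ α : Ordinal, h ξ α ≤ G ξ α

/-- `g` is a *left adjoint* of `f`. -/
def LeftAdjoint (f g : Ordinal → Ordinal) : Prop :=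
  ∀ α β : Ordinal, (α = f β → g α = β) ∧ (α < f β → g α < β)

/-!
By induction on `ξ`. Left adjoints compose contravariantly, matching `F (ξ + ζ) = F ξ ∘ F ζ` and
`G (ξ + ζ) = G ζ ∘ G ξ`, so only an additively principal `ξ = ω ^ r` with `r ≠ 0` needs an
argument. There the extremality of `F` and `G` is tested against families assembled along Cantor
normal forms: exponent-indexed normal (initial) maps `T a` with `T 0 = f` (`T 0 = g`) that absorb
one another extend to a weak (co)hyperation taking the value `T r` at `ω ^ r`. Taking for `T r` the
enumeration of the common fixed points of the `F ζ`, `ζ < ω ^ r`, minimality shows that these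
fixed points form the range of `F (ω ^ r)`, whence `F (ω ^ r) ∘ G (ω ^ r) ≤ id`. Taking for `T r`
the least value of the lower adjoint of `F (ω ^ r)` along the orbit `G ζ α`, maximality gives
`G (ω ^ r) ∘ F (ω ^ r) ≥ id`.
-/

open Order Set

universe u v

section Initial

variable {g g₁ g₂ : Ordinal.{u} → Ordinal.{u}}

theorem initial_iff_forall_lt : Initial g ↔ ∀ α, ∀ x < g α, ∃ α' < α, g α' = x := by
  constructor
  · intro hg α x hx
    obtain ⟨γ, hγ⟩ := hg (succ α)
    have hαγ : g α < γ := (hγ ▸ mem_image_of_mem g (lt_succ α) : g α ∈ {x | x < γ})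
    obtain ⟨α', hα', rfl⟩ : x ∈ g '' {a | a < succ α} := hγ ▸ hx.trans hαγ
    refine ⟨α', (lt_succ_iff.1 hα').lt_of_ne ?_, rfl⟩
    rintro rfl
    exact hx.false
  · intro hg β
    have hlower : IsLowerSet (g '' {α | α < β}) := by
      rintro _ x hx ⟨α, hα, rfl⟩
      obtain rfl | hx := hx.eq_or_lt
      · exact mem_image_of_mem g hα
      · obtain ⟨α', hα', rfl⟩ := hg α x hx
        exact mem_image_of_mem g (hα'.trans hα)
    obtain h | h := hlower.eq_univ_or_Iio
    · have hbdd : BddAbove (g '' {α | α < β}) := (bddAbove_of_small : BddAbove (g '' Iio β))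
      rw [h] at hbdd
      exact absurd hbdd not_bddAbove_univ
    · exact h

theorem Initial.apply_le (hg : Initial g) (α : Ordinal) : g α ≤ α := by
  induction α using WellFoundedLT.induction with
  | _ α IH =>
    by_contra! h
    obtain ⟨α', hα', rfl⟩ := initial_iff_forall_lt.1 hg α α h
    exact (IH α' hα').not_gt hα'

theorem Initial.comp (hg₁ : Initial g₁) (hg₂ : Initial g₂) : Initial (g₁ ∘ g₂) := by
  intro β
  obtain ⟨γ, hγ⟩ := hg₂ β
  obtain ⟨γ', hγ'⟩ := hg₁ γ
  exact ⟨γ', by rw [image_comp, hγ, hγ']⟩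

theorem initial_id : Initial (id : Ordinal.{u} → Ordinal.{u}) :=
  fun β => ⟨β, image_id _⟩

theorem initial_const_zero : Initial (fun _ : Ordinal.{u} => (0 : Ordinal.{u})) :=
  initial_iff_forall_lt.2 fun _ _ hx => absurd hx zero_le.not_gt

end Initial

section LeftAdjoint

variable {f f₁ f₂ g g₁ g₂ : Ordinal.{u} → Ordinal.{u}}

theorem leftAdjoint_id : LeftAdjoint id id :=
  fun _ _ => ⟨id, id⟩

theorem LeftAdjoint.comp (h₁ : LeftAdjoint f₁ g₁) (h₂ : LeftAdjoint f₂ g₂) :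
    LeftAdjoint (f₁ ∘ f₂) (g₂ ∘ g₁) :=
  fun α β => ⟨fun h => (h₂ _ β).1 ((h₁ α _).1 h), fun h => (h₂ _ β).2 ((h₁ α _).2 h)⟩

theorem leftAdjoint_of_apply_le (hf : StrictMono f) (hgf : ∀ β, g (f β) = β)
    (hfg : ∀ α, f (g α) ≤ α) : LeftAdjoint f g := by
  refine fun α β => ⟨?_, fun h => hf.lt_iff_lt.1 ((hfg α).trans_lt h)⟩
  rintro rfl
  exact hgf β

end LeftAdjoint

section CNFProd

theorem lt_omega0_opow_log_add_one (x : Ordinal) : x < ω ^ (log ω x + 1) :=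
  succ_eq_add_one (log ω x) ▸ lt_opow_succ_log_self one_lt_omega0 x

variable {M : Type*} [Monoid M] (T : Ordinal.{v} → M)

noncomputable def cnfProd (x : Ordinal.{v}) : M :=
  if x = 0 then 1 else T (log ω x) * cnfProd (x - ω ^ log ω x)
termination_by x
decreasing_by exact sub_omega0_opow_log_lt ‹_›

@[simp]
theorem cnfProd_zero : cnfProd T 0 = 1 := by
  rw [cnfProd, if_pos rfl]

theorem cnfProd_of_ne_zero {x : Ordinal} (hx : x ≠ 0) :
    cnfProd T x = T (log ω x) * cnfProd T (x - ω ^ log ω x) := by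
  rw [cnfProd, if_neg hx]

theorem cnfProd_opow_add {s y : Ordinal} (hy : y < ω ^ (s + 1)) :
    cnfProd T (ω ^ s + y) = T s * cnfProd T y := by
  have hne : ω ^ s + y ≠ 0 := ((opow_pos s omega0_pos).trans_le le_self_add).ne'
  have hlog : log ω (ω ^ s + y) = s := (log_eq_iff one_lt_omega0 hne s).2
    ⟨le_self_add, isPrincipal_add_omega0_opow _
      ((opow_lt_opow_iff_right one_lt_omega0).2 (lt_add_one s)) hy⟩
  rw [cnfProd_of_ne_zero T hne, hlog, Ordinal.add_sub_cancel]

theorem cnfProd_opow (s : Ordinal) : cnfProd T (ω ^ s) = T s := by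
  simpa using cnfProd_opow_add T (y := 0) (opow_pos _ omega0_pos)

theorem cnfProd_mem (S : Submonoid M) (hT : ∀ a, T a ∈ S) (x : Ordinal) : cnfProd T x ∈ S := by
  induction x using WellFoundedLT.induction with
  | _ x IH =>
    rcases eq_or_ne x 0 with rfl | hx
    · exact (cnfProd_zero T).symm ▸ S.one_mem
    · rw [cnfProd_of_ne_zero T hx]
      exact S.mul_mem (hT _) (IH _ (sub_omega0_opow_log_lt hx))

variable {T}

theorem cnfProd_mul_of_lt_opow (habs : ∀ a b, a < b → T a * T b = T b) {ξ t : Ordinal}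
    (hξ : ξ < ω ^ t) : cnfProd T ξ * T t = T t := by
  induction ξ using WellFoundedLT.induction with
  | _ ξ IH =>
    rcases eq_or_ne ξ 0 with rfl | hξ0
    · simp
    · have hlt := sub_omega0_opow_log_lt hξ0
      rw [cnfProd_of_ne_zero T hξ0, mul_assoc, IH _ hlt (hlt.trans hξ),
        habs _ _ ((lt_opow_iff_log_lt one_lt_omega0 hξ0).1 hξ)]

theorem cnfProd_add (habs : ∀ a b, a < b → T a * T b = T b) (ξ ζ : Ordinal) :
    cnfProd T (ξ + ζ) = cnfProd T ξ * cnfProd T ζ := by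
  induction ξ using WellFoundedLT.induction with
  | _ ξ IH =>
    rcases eq_or_ne ξ 0 with rfl | hξ
    · simp
    rcases eq_or_ne ζ 0 with rfl | hζ
    · simp
    rcases lt_or_ge (log ω ξ) (log ω ζ) with hst | hts
    · have hξt : ξ < ω ^ log ω ζ := (lt_opow_iff_log_lt one_lt_omega0 hξ).2 hst
      rw [add_of_omega0_opow_le hξt (opow_log_le_self ω hζ), cnfProd_of_ne_zero T hζ,
        ← mul_assoc, cnfProd_mul_of_lt_opow habs hξt]
    · obtain ⟨ξ', hξ'ξ, hξ'⟩ : ∃ ξ' < ξ, ω ^ log ω ξ + ξ' = ξ :=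
        ⟨_, sub_omega0_opow_log_lt hξ, Ordinal.add_sub_cancel_of_le (opow_log_le_self ω hξ)⟩
      have hξ'lt : ξ' < ω ^ (log ω ξ + 1) := hξ'ξ.trans (lt_omega0_opow_log_add_one ξ)
      have hζlt : ζ < ω ^ (log ω ξ + 1) := (lt_omega0_opow_log_add_one ζ).trans_le
        (opow_le_opow_right omega0_pos (add_le_add_left hts 1))
      rw [← hξ', add_assoc, cnfProd_opow_add T (isPrincipal_add_omega0_opow _ hξ'lt hζlt),
        cnfProd_opow_add T hξ'lt, IH ξ' hξ'ξ, mul_assoc]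

end CNFProd

section Hyperation

variable {f g : Ordinal.{u} → Ordinal.{u}} {F G : Ordinal.{v} → Ordinal.{u} → Ordinal.{u}}
  {r : Ordinal.{v}}

-- `Ordinal → Ordinal` carries the pointwise monoid structure; composition lives on `Function.End`.
noncomputable def cnfComp (T : Ordinal.{v} → Ordinal.{u} → Ordinal.{u}) (ξ : Ordinal.{v}) :
    Ordinal.{u} → Ordinal.{u} :=
  cnfProd (M := Function.End Ordinal.{u}) T ξ

noncomputable def cnfRevComp (T : Ordinal.{v} → Ordinal.{u} → Ordinal.{u}) (ξ : Ordinal.{v}) :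
    Ordinal.{u} → Ordinal.{u} :=
  (cnfProd (M := (Function.End Ordinal.{u})ᵐᵒᵖ) (fun a => .op (T a)) ξ).unop

theorem cnfComp_opow (T : Ordinal.{v} → Ordinal.{u} → Ordinal.{u}) (s : Ordinal.{v}) :
    cnfComp T (ω ^ s) = T s :=
  cnfProd_opow (M := Function.End Ordinal.{u}) T s

theorem cnfRevComp_opow (T : Ordinal.{v} → Ordinal.{u} → Ordinal.{u}) (s : Ordinal.{v}) :
    cnfRevComp T (ω ^ s) = T s :=
  congrArg MulOpposite.unop (cnfProd_opow (M := (Function.End Ordinal.{u})ᵐᵒᵖ) _ s)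

theorem weakHyperation_cnfComp {T : Ordinal.{v} → Ordinal.{u} → Ordinal.{u}}
    (hT : ∀ a, IsNormal (T a)) (hT0 : T 0 = f)
    (habs : ∀ a b, a < b → ∀ x, T a (T b x) = T b x) : WeakHyperation f (cnfComp T) := by
  let normal : Submonoid (Function.End Ordinal.{u}) :=
    { carrier := {h | IsNormal h}, one_mem' := IsNormal.id, mul_mem' := fun ha hb => ha.comp hb }
  let T' : Ordinal.{v} → Function.End Ordinal.{u} := T
  have habs' : ∀ a b, a < b → T' a * T' b = T' b := fun a b h => funext (habs a b h)
  have hadd := cnfProd_add habs'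
  refine ⟨cnfProd_mem T' normal hT, cnfProd_zero T', ?_, hadd⟩
  rw [← opow_zero ω, cnfComp_opow, hT0]

theorem weakCohyperation_cnfRevComp {T : Ordinal.{v} → Ordinal.{u} → Ordinal.{u}}
    (hT : ∀ a, Initial (T a)) (hT0 : T 0 = g)
    (habs : ∀ a b, a < b → ∀ x, T b (T a x) = T b x) : WeakCohyperation g (cnfRevComp T) := by
  let initial : Submonoid (Function.End Ordinal.{u})ᵐᵒᵖ :=
    { carrier := {h | Initial h.unop}, one_mem' := initial_id,
      mul_mem' := fun {a b} ha hb => show Initial (b.unop ∘ a.unop) from hb.comp ha }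
  let T' : Ordinal.{v} → (Function.End Ordinal.{u})ᵐᵒᵖ := fun a => .op (T a)
  have habs' : ∀ a b, a < b → T' a * T' b = T' b :=
    fun a b h => congrArg MulOpposite.op (funext (habs a b h))
  refine ⟨cnfProd_mem T' initial hT, congrArg MulOpposite.unop (cnfProd_zero T'), ?_,
    fun ξ ζ => congrArg MulOpposite.unop (cnfProd_add habs' ξ ζ)⟩
  rw [← opow_zero ω, cnfRevComp_opow, hT0]

theorem WeakHyperation.apply_apply_opow (hF : WeakHyperation f F) {ζ : Ordinal} (hζ : ζ < ω ^ r)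
    (x : Ordinal) : F ζ (F (ω ^ r) x) = F (ω ^ r) x := by
  rw [← Function.comp_apply (f := F ζ), ← hF.2.2.2, add_omega0_opow hζ]

theorem WeakCohyperation.apply_opow_apply (hG : WeakCohyperation g G) {ζ : Ordinal}
    (hζ : ζ < ω ^ r) (x : Ordinal) : G (ω ^ r) (G ζ x) = G (ω ^ r) x := by
  rw [← Function.comp_apply (f := G (ω ^ r)), ← hG.2.2.2, add_omega0_opow hζ]

theorem WeakHyperation.strictMono_left (hF : WeakHyperation f F) {x : Ordinal} (hx : x < f x) :
    StrictMono (F · x) := by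
  intro a b hab
  obtain ⟨d, rfl⟩ := exists_add_of_le (succ_le_of_lt hab)
  have hF1 : F 1 = f := hF.2.2.1
  calc F a x < F a (f x) := (hF.1 a).strictMono hx
    _ ≤ F a (f (F d x)) :=
      (hF.1 a).monotone ((hF1 ▸ hF.1 1).monotone ((hF.1 d).strictMono.le_apply))
    _ = F (a + 1 + d) x := by simp [hF.2.2.2, hF1]

theorem IsHyperation.apply_eq_self (hF : IsHyperation id F) (ξ x : Ordinal) : F ξ x = x := by
  have hid : WeakHyperation id fun _ => (id : Ordinal.{u} → Ordinal.{u}) :=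
    ⟨fun _ => IsNormal.id, rfl, rfl, fun _ _ => rfl⟩
  exact (hF.2 _ hid ξ x).antisymm (hF.1.1 ξ).strictMono.le_apply

end Hyperation

section Extremal

variable {f g : Ordinal.{u} → Ordinal.{u}} {F G : Ordinal.{v} → Ordinal.{u} → Ordinal.{u}}
  {r : Ordinal.{v}}

theorem IsHyperation.apply_opow_le (hF : IsHyperation f F) (hr : r ≠ 0)
    {N : Ordinal.{u} → Ordinal.{u}} (hN : IsNormal N) (hfix : ∀ ξ < ω ^ r, ∀ x, F ξ (N x) = N x)
    (x : Ordinal) : F (ω ^ r) x ≤ N x := by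
  by_cases hid : ∀ y, f y = y
  · obtain rfl : f = id := funext hid
    exact (hF.apply_eq_self _ x).trans_le hN.strictMono.le_apply
  push Not at hid
  obtain ⟨x₀, hx₀⟩ := hid
  have hF1 : F 1 = f := hF.1.2.2.1
  have hσ := hF.1.strictMono_left ((hF1 ▸ hF.1.1 1).strictMono.le_apply.lt_of_ne' hx₀)
  -- Above `r` we need normal maps with strictly shrinking ranges inside `range N`: Veblen
  -- iterates of `N`, indexed through the strictly increasing `F · x₀`.
  let T : Ordinal.{v} → Ordinal.{u} → Ordinal.{u} := fun a =>
    if a < r then F (ω ^ a) else veblenWith N (F a x₀ - F r x₀)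
  have hT : WeakHyperation f (cnfComp T) := by
    refine weakHyperation_cnfComp (fun a => ?_) ?_ fun a b hab y => ?_
    · dsimp only [T]
      split_ifs
      exacts [hF.1.1 _, isNormal_veblenWith hN _]
    · simp [T, pos_iff_ne_zero.2 hr, hF1]
    · dsimp only [T]
      rcases lt_or_ge b r with hb | hb
      · rw [if_pos hb, if_pos (hab.trans hb)]
        exact hF.1.apply_apply_opow ((opow_lt_opow_iff_right one_lt_omega0).2 hab) y
      rw [if_neg hb.not_gt]
      rcases lt_or_ge a r with ha | ha
      · obtain ⟨z, hz⟩ := veblenWith_mem_range hN (o := F b x₀ - F r x₀) (a := y)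
        rw [if_pos ha, ← hz]
        exact hfix _ ((opow_lt_opow_iff_right one_lt_omega0).2 ha) z
      · rw [if_neg ha.not_gt]
        refine veblenWith_veblenWith_of_lt hN ?_ y
        rw [Ordinal.sub_lt_of_le (hσ.monotone ha),
          Ordinal.add_sub_cancel_of_le (hσ.monotone (ha.trans hab.le))]
        exact hσ hab
  simpa [T, cnfComp_opow] using hF.2 _ hT (ω ^ r) x

theorem IsCohyperation.le_apply_opow (hG : IsCohyperation g G) (hr : r ≠ 0)
    {K : Ordinal.{u} → Ordinal.{u}} (hK : Initial K) (hfix : ∀ ξ < ω ^ r, ∀ x, K (G ξ x) = K x)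
    (x : Ordinal) : K x ≤ G (ω ^ r) x := by
  let T : Ordinal.{v} → Ordinal.{u} → Ordinal.{u} := fun a =>
    if a < r then G (ω ^ a) else if a = r then K else fun _ => 0
  have hT := weakCohyperation_cnfRevComp (T := T) (g := g) (fun a => ?_) ?_ fun a b hab y => ?_
  · simpa [T, cnfRevComp_opow] using hG.2 _ hT (ω ^ r) x
  · dsimp only [T]
    split_ifs
    exacts [hG.1.1 _, hK, initial_const_zero]
  · simp [T, pos_iff_ne_zero.2 hr, hG.1.2.2.1]
  · dsimp only [T]
    rcases lt_trichotomy b r with hb | rfl | hb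
    · rw [if_pos hb, if_pos (hab.trans hb)]
      exact hG.1.apply_opow_apply ((opow_lt_opow_iff_right one_lt_omega0).2 hab) y
    · rw [if_neg (lt_irrefl b), if_pos rfl, if_pos hab]
      exact hfix _ ((opow_lt_opow_iff_right one_lt_omega0).2 hab) y
    · rw [if_neg hb.not_gt, if_neg hb.ne']

theorem IsHyperation.range_apply_opow (hF : IsHyperation f F) (hr : r ≠ 0) :
    range (F (ω ^ r)) = {α | ∀ ξ < ω ^ r, F ξ α = α} := by
  set S := {α | ∀ ξ < ω ^ r, F ξ α = α}
  have hL := (hF.1.1 (ω ^ r)).strictMono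
  have hLS : range (F (ω ^ r)) ⊆ S := by
    rintro _ ⟨x, rfl⟩ ξ hξ
    exact hF.1.apply_apply_opow hξ x
  have hS : ¬ BddAbove S := fun h => hL.not_bddAbove_range_of_wellFoundedLT (h.mono hLS)
  have hSsup : ∀ t ⊆ S, t.Nonempty → BddAbove t → sSup t ∈ S := by
    intro t ht hne hbdd ξ hξ
    rw [(hF.1.1 ξ).map_sSup hne hbdd, image_congr fun α hα => ht hα ξ hξ, image_id']
  have hN := isNormal_enumOrd hSsup hS
  have hLN : F (ω ^ r) = enumOrd S := by
    refine le_antisymm (fun x => hF.apply_opow_le hr hN (fun ξ hξ y => enumOrd_mem hS y ξ hξ) x) ?_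
    simpa only [enumOrd_range hL] using
      enumOrd_le_of_subset hL.not_bddAbove_range_of_wellFoundedLT hLS
  rw [hLN, range_enumOrd hS]

end Extremal

noncomputable def lowerAdjoint (N : Ordinal.{u} → Ordinal.{u}) (α : Ordinal.{u}) : Ordinal.{u} :=
  sInf {δ | α ≤ N δ}

theorem gc_lowerAdjoint {N : Ordinal.{u} → Ordinal.{u}} (hN : StrictMono N) :
    GaloisConnection (lowerAdjoint N) N := fun α _ =>
  ⟨fun h => (csInf_mem (s := {δ | α ≤ N δ}) ⟨α, hN.le_apply⟩).trans (hN.monotone h),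
    fun h => csInf_le' h⟩

theorem lowerAdjoint_apply {N : Ordinal.{u} → Ordinal.{u}} (hN : StrictMono N) (β : Ordinal) :
    lowerAdjoint N (N β) = β :=
  ((gc_lowerAdjoint hN).l_u_le β).antisymm (hN.le_iff_le.1 ((gc_lowerAdjoint hN).le_u_l _))

noncomputable def orbitLowerAdjoint (F G : Ordinal.{v} → Ordinal.{u} → Ordinal.{u})
    (r : Ordinal.{v}) (α : Ordinal.{u}) : Ordinal.{u} :=
  ⨅ ζ : Iio (ω ^ r), lowerAdjoint (F (ω ^ r)) (G ζ α)

instance nonempty_Iio_omega0_opow (r : Ordinal) : Nonempty (Iio (ω ^ r)) :=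
  ⟨⟨0, opow_pos r omega0_pos⟩⟩

section OmegaPow

variable {f g : Ordinal.{u} → Ordinal.{u}} {F G : Ordinal.{v} → Ordinal.{u} → Ordinal.{u}}
  {r : Ordinal.{v}}

theorem orbitLowerAdjoint_le (α : Ordinal) (ζ : Iio (ω ^ r)) :
    orbitLowerAdjoint F G r α ≤ lowerAdjoint (F (ω ^ r)) (G ζ α) :=
  ciInf_le' (fun ζ : Iio (ω ^ r) => lowerAdjoint (F (ω ^ r)) (G ζ α)) ζ

theorem orbitLowerAdjoint_apply_of_lt (hF : IsHyperation f F) (hG : IsCohyperation g G)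
    {ξ : Ordinal} (hξ : ξ < ω ^ r) (α : Ordinal) :
    orbitLowerAdjoint F G r (G ξ α) = orbitLowerAdjoint F G r α := by
  have hlad := (gc_lowerAdjoint (hF.1.1 (ω ^ r)).strictMono).monotone_l
  have hadd (ζ η x : Ordinal) : G (ζ + η) x = G η (G ζ x) := congrFun (hG.1.2.2.2 ζ η) x
  apply le_antisymm
  · obtain ⟨⟨ζ, hζ⟩, hmin⟩ :=
      ciInf_mem fun ζ : Iio (ω ^ r) => lowerAdjoint (F (ω ^ r)) (G ζ α)
    have hη : ξ + (ζ + ξ - ξ) = ζ + ξ := Ordinal.add_sub_cancel_of_le le_add_self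
    calc orbitLowerAdjoint F G r (G ξ α)
        ≤ lowerAdjoint (F (ω ^ r)) (G (ζ + ξ - ξ) (G ξ α)) := orbitLowerAdjoint_le _
          ⟨_, (sub_le_self _ _).trans_lt (isPrincipal_add_omega0_opow r hζ hξ)⟩
      _ = lowerAdjoint (F (ω ^ r)) (G ξ (G ζ α)) := by rw [← hadd, hη, hadd]
      _ ≤ lowerAdjoint (F (ω ^ r)) (G ζ α) := hlad ((hG.1.1 ξ).apply_le _)
      _ = orbitLowerAdjoint F G r α := hmin
  · refine le_ciInf fun ⟨ζ, hζ⟩ => ?_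
    calc orbitLowerAdjoint F G r α ≤ lowerAdjoint (F (ω ^ r)) (G (ξ + ζ) α) :=
          orbitLowerAdjoint_le _ ⟨_, isPrincipal_add_omega0_opow r hξ hζ⟩
      _ = lowerAdjoint (F (ω ^ r)) (G ζ (G ξ α)) := by rw [hadd]

theorem orbitLowerAdjoint_apply_opow (hF : IsHyperation f F)
    (IH : ∀ ζ < ω ^ r, LeftAdjoint (F ζ) (G ζ)) (β : Ordinal) :
    orbitLowerAdjoint F G r (F (ω ^ r) β) = β := by
  have hfix (ζ : Iio (ω ^ r)) : G ζ (F (ω ^ r) β) = F (ω ^ r) β :=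
    (IH ζ ζ.2 _ _).1 (hF.1.apply_apply_opow ζ.2 β).symm
  simp only [orbitLowerAdjoint, hfix, lowerAdjoint_apply (hF.1.1 (ω ^ r)).strictMono, ciInf_const]

theorem initial_orbitLowerAdjoint (hF : IsHyperation f F) (hG : IsCohyperation g G)
    (IH : ∀ ζ < ω ^ r, LeftAdjoint (F ζ) (G ζ)) : Initial (orbitLowerAdjoint F G r) := by
  refine initial_iff_forall_lt.2 fun α x hx =>
    ⟨F (ω ^ r) x, ?_, orbitLowerAdjoint_apply_opow hF IH x⟩
  have h := orbitLowerAdjoint_le (F := F) (G := G) α ⟨0, opow_pos r omega0_pos⟩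
  rw [hG.1.2.1] at h
  exact (gc_lowerAdjoint (hF.1.1 (ω ^ r)).strictMono).lt_iff_lt.1 (hx.trans_le h)

theorem apply_opow_apply_opow_le (hF : IsHyperation f F) (hG : IsCohyperation g G) (hr : r ≠ 0)
    (IH : ∀ ζ < ω ^ r, LeftAdjoint (F ζ) (G ζ)) (α : Ordinal) :
    F (ω ^ r) (G (ω ^ r) α) ≤ α := by
  induction α using WellFoundedLT.induction with
  | _ α IHα =>
  by_cases hfix : ∀ ζ < ω ^ r, G ζ α = α
  · have hα : α ∈ range (F (ω ^ r)) := by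
      rw [hF.range_apply_opow hr]
      intro ζ hζ
      refine ((hF.1.1 ζ).strictMono.le_apply).antisymm' (not_lt.1 fun h => ?_)
      exact ((IH ζ hζ α α).2 h).ne (hfix ζ hζ)
    obtain ⟨c, rfl⟩ := hα
    refine (hF.1.1 _).monotone (not_lt.1 fun hc => ?_)
    obtain ⟨α', hα', hα'c⟩ := initial_iff_forall_lt.1 (hG.1.1 _) _ c hc
    exact (IHα α' hα').not_gt (hα'c ▸ hα')
  · push Not at hfix
    obtain ⟨ζ, hζ, hne⟩ := hfix
    have hlt := ((hG.1.1 ζ).apply_le α).lt_of_ne hne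
    calc F (ω ^ r) (G (ω ^ r) α) = F (ω ^ r) (G (ω ^ r) (G ζ α)) := by
          rw [hG.1.apply_opow_apply hζ]
      _ ≤ G ζ α := IHα _ hlt
      _ ≤ α := hlt.le

theorem apply_opow_apply_opow_eq (hF : IsHyperation f F) (hG : IsCohyperation g G) (hr : r ≠ 0)
    (IH : ∀ ζ < ω ^ r, LeftAdjoint (F ζ) (G ζ)) (β : Ordinal) :
    G (ω ^ r) (F (ω ^ r) β) = β := by
  refine le_antisymm
    ((hF.1.1 _).strictMono.le_iff_le.1 (apply_opow_apply_opow_le hF hG hr IH _)) ?_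
  calc β = orbitLowerAdjoint F G r (F (ω ^ r) β) := (orbitLowerAdjoint_apply_opow hF IH β).symm
    _ ≤ G (ω ^ r) (F (ω ^ r) β) := hG.le_apply_opow hr (initial_orbitLowerAdjoint hF hG IH)
      (fun _ hξ => orbitLowerAdjoint_apply_of_lt hF hG hξ) _

theorem leftAdjoint_opow (hF : IsHyperation f F) (hG : IsCohyperation g G) (hr : r ≠ 0)
    (IH : ∀ ζ < ω ^ r, LeftAdjoint (F ζ) (G ζ)) : LeftAdjoint (F (ω ^ r)) (G (ω ^ r)) :=
  leftAdjoint_of_apply_le (hF.1.1 _).strictMono (apply_opow_apply_opow_eq hF hG hr IH)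
    (apply_opow_apply_opow_le hF hG hr IH)

end OmegaPow

theorem cohyperation_leftAdjoint_hyperation_general (f : Ordinal → Ordinal)
    (F : Ordinal → Ordinal → Ordinal) (hF : IsHyperation f F)
    (g : Ordinal → Ordinal) (hg : LeftAdjoint f g)
    (G : Ordinal → Ordinal → Ordinal) (hG : IsCohyperation g G) :
    ∀ ξ : Ordinal, LeftAdjoint (F ξ) (G ξ) := by
  obtain ⟨-, hF0, hF1, hFadd⟩ := hF.1
  obtain ⟨-, hG0, hG1, hGadd⟩ := hG.1
  intro ξ
  induction ξ using WellFoundedLT.induction with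
  | _ ξ IH =>
  by_cases hξ : IsPrincipal (· + ·) ξ
  · obtain rfl | ⟨r, rfl⟩ := isPrincipal_add_iff_zero_or_omega0_opow.1 hξ
    · rw [hF0, hG0]
      exact leftAdjoint_id
    · beta_reduce at IH ⊢
      obtain rfl | hr := eq_or_ne r 0
      · rwa [opow_zero, hF1, hG1]
      · exact leftAdjoint_opow hF hG hr IH
  · obtain ⟨a, ha, b, hb, rfl⟩ := exists_lt_add_of_not_isPrincipal_add hξ
    rw [hFadd, hGadd]
    exact (IH a ha).comp (IH b hb)

theorem cohyperation_leftAdjoint_hyperation (f : Ordinal → Ordinal) (hf : Order.IsNormal f)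
    (F : Ordinal → Ordinal → Ordinal) (hF : IsHyperation f F)
    (g : Ordinal → Ordinal) (hg : LeftAdjoint f g)
    (G : Ordinal → Ordinal → Ordinal) (hG : IsCohyperation g G) :
    ∀ ξ : Ordinal, LeftAdjoint (F ξ) (G ξ) :=
  cohyperation_leftAdjoint_hyperation_general f F hF g hg G hG
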